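/- arXiv:2207.04422 — 3 statements merged into one kernel-verified Lean document; each statement's English description precedes it below -/
import Mathlib

section
/- Improved Kato lemma. Let p > 1, a > 0, q > 0 and B > 0, and set M := ((p-1)/2)·a − q/2 + 1, assumed to satisfy M > 0. Then there exists a positive constant C₀ = C₀(p, a, q, B) such that the following holds: for all A, R, T₀ > 0 and all T > 0, if F : [0, T) → ℝ is twice continuously differentiable and satisfies (i) F(t) ≥ A·t^a for all t ∈ [T₀, T), (ii) F''(t) ≥ B·(t + R)^{−q}·|F(t)|^p for all t ∈ [0, T), (iii) F(0) ≥ 0 and F'(0) > 0, and if T₁ := max{T₀, F(0)/F'(0), R} satisfies T₁ ≥ C₀·A^{−(p−1)/(2M)}, then T < 2^{2/M}·T₁. -/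
/-!
Suppose `T ≥ b² T₁` with `b = 2 ^ (1 / M)`, and put `T₂ = b T₁`, `T₃ = (T₂ + b² T₁) / 2`.
On `[T₁, T₃]` we have `F' ≥ 0` (as `F'' ≥ 0` and `F'(0) > 0`) and `F'' ≥ β F ^ p` with
`β = B (2 T₃) ^ (-q)`. A second-order Taylor bound and Bernoulli's inequality show that
`F ^ (p + 1)` doubles on `[T₁, T₂]` once `β F(T₁) ^ (p - 1) (T₂ - T₁) ^ 2` is large. The energy
`F' ^ 2 - 2 β / (p + 1) F ^ (p + 1)` is nondecreasing, so from `T₂` on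
`F' ≥ √(β / (p + 1)) F ^ ((p + 1) / 2)`, and integrating `(F ^ (-(p - 1) / 2))'` over `[T₂, T₃]`
bounds `β F(T₁) ^ (p - 1) (T₃ - T₂) ^ 2` from above. As `F(T₁) ≥ A T₁ ^ a`, both quantities are
at least a constant times `A ^ (p - 1) T₁ ^ (2 M)`, which is large when
`T₁ ≥ C₀ A ^ (-(p - 1) / (2 M))`.
-/

open Set Real Filter Topology

lemma monotoneOn_Icc_of_hasDerivAt_nonneg {f f' : ℝ → ℝ} {x y : ℝ}
    (hf : ∀ t ∈ Icc x y, HasDerivAt f (f' t) t) (hf' : ∀ t ∈ Icc x y, 0 ≤ f' t) :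
    MonotoneOn f (Icc x y) := by
  refine monotoneOn_of_hasDerivWithinAt_nonneg (f' := f') (convex_Icc x y)
    (fun t ht => (hf t ht).continuousAt.continuousWithinAt) (fun t ht => ?_) (fun t ht => ?_)
  all_goals rw [interior_Icc] at ht
  · exact (hf t (Ioo_subset_Icc_self ht)).hasDerivWithinAt
  · exact hf' t (Ioo_subset_Icc_self ht)

lemma add_mul_add_sq_le_of_le_second_deriv {f f' f'' : ℝ → ℝ} {D x y : ℝ} (hxy : x ≤ y)
    (hf : ∀ t ∈ Icc x y, HasDerivAt f (f' t) t) (hf' : ∀ t ∈ Icc x y, HasDerivAt f' (f'' t) t)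
    (hD : ∀ t ∈ Icc x y, D ≤ f'' t) :
    f x + f' x * (y - x) + D / 2 * (y - x) ^ 2 ≤ f y := by
  have hslope : MonotoneOn (fun t => f' t - D * t) (Icc x y) :=
    monotoneOn_Icc_of_hasDerivAt_nonneg
      (fun t ht => ((hf' t ht).sub ((hasDerivAt_id' t).const_mul D)).congr_deriv (by rw [mul_one]))
      (fun t ht => sub_nonneg.2 (hD t ht))
  have hgap : MonotoneOn (fun t => f t - f' x * t - D / 2 * (t - x) ^ 2) (Icc x y) := by
    refine monotoneOn_Icc_of_hasDerivAt_nonneg (f' := fun t => f' t - f' x - D * (t - x))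
      (fun t ht => ?_) (fun t ht => ?_)
    · refine (((hf t ht).sub ((hasDerivAt_id' t).const_mul (f' x))).sub
        ((((hasDerivAt_id' t).sub_const x).pow 2).const_mul (D / 2))).congr_deriv ?_
      push_cast
      ring
    · have := hslope ⟨le_rfl, hxy⟩ ht ht.1
      dsimp only at this ⊢
      linarith
  have := hgap ⟨le_rfl, hxy⟩ ⟨hxy, le_rfl⟩ hxy
  dsimp only at this
  linarith

lemma monotoneOn_energy {F F' F'' : ℝ → ℝ} {p β x y : ℝ} (hp : 0 ≤ p)
    (hF : ∀ t ∈ Icc x y, HasDerivAt F (F' t) t) (hF' : ∀ t ∈ Icc x y, HasDerivAt F' (F'' t) t)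
    (hF'_nonneg : ∀ t ∈ Icc x y, 0 ≤ F' t) (hode : ∀ t ∈ Icc x y, β * F t ^ p ≤ F'' t) :
    MonotoneOn (fun t => F' t ^ 2 - 2 * β / (p + 1) * F t ^ (p + 1)) (Icc x y) := by
  refine monotoneOn_Icc_of_hasDerivAt_nonneg
    (f' := fun t => 2 * F' t * (F'' t - β * F t ^ p)) (fun t ht => ?_) (fun t ht => ?_)
  · have hpow := (hF t ht).rpow_const (p := p + 1) (Or.inr (by linarith))
    rw [add_sub_cancel_right] at hpow
    refine (((hF' t ht).pow 2).sub (hpow.const_mul (2 * β / (p + 1)))).congr_deriv ?_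
    field_simp
    ring
  · exact mul_nonneg (mul_nonneg zero_le_two (hF'_nonneg t ht)) (sub_nonneg.2 (hode t ht))

lemma mul_sub_le_rpow_neg_of_rpow_le_deriv {F F' : ℝ → ℝ} {r η x y : ℝ} (hr : 0 ≤ r)
    (hxy : x ≤ y) (hF : ∀ t ∈ Icc x y, HasDerivAt F (F' t) t) (hpos : ∀ t ∈ Icc x y, 0 < F t)
    (hslope : ∀ t ∈ Icc x y, η * F t ^ (r + 1) ≤ F' t) :
    r * η * (y - x) ≤ F x ^ (-r) := by
  have hmono : MonotoneOn (fun t => -F t ^ (-r) - r * η * t) (Icc x y) := by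
    refine monotoneOn_Icc_of_hasDerivAt_nonneg
      (f' := fun t => r * (F t ^ (-(r + 1)) * F' t - η)) (fun t ht => ?_) (fun t ht => ?_)
    · refine (((hF t ht).rpow_const (p := -r) (Or.inl (hpos t ht).ne')).neg.sub
        ((hasDerivAt_id' t).const_mul (r * η))).congr_deriv ?_
      rw [show -r - 1 = -(r + 1) by ring]
      ring
    · have hinv : F t ^ (-(r + 1)) * F t ^ (r + 1) = 1 := by
        rw [← rpow_add (hpos t ht)]; simp
      refine mul_nonneg hr (sub_nonneg.2 ?_)
      calc η = F t ^ (-(r + 1)) * (η * F t ^ (r + 1)) := by rw [mul_left_comm, hinv, mul_one]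
        _ ≤ F t ^ (-(r + 1)) * F' t :=
          mul_le_mul_of_nonneg_left (hslope t ht) (rpow_nonneg (hpos t ht).le _)
  have := hmono ⟨le_rfl, hxy⟩ ⟨hxy, le_rfl⟩ hxy
  have hy : 0 < F y ^ (-r) := rpow_pos_of_pos (hpos y ⟨hxy, le_rfl⟩) _
  dsimp only at this
  linarith

lemma two_mul_rpow_le_of_le_second_deriv {F F' F'' : ℝ → ℝ} {p β x y : ℝ} (hp : 0 ≤ p)
    (hβ : 0 ≤ β) (hxy : x ≤ y) (hF : ∀ t ∈ Icc x y, HasDerivAt F (F' t) t)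
    (hF' : ∀ t ∈ Icc x y, HasDerivAt F' (F'' t) t) (hFx : 0 < F x)
    (hF'_nonneg : ∀ t ∈ Icc x y, 0 ≤ F' t) (hode : ∀ t ∈ Icc x y, β * F t ^ p ≤ F'' t)
    (hlong : 2 ≤ (p + 1) * β * F x ^ (p - 1) * (y - x) ^ 2) :
    2 * F x ^ (p + 1) ≤ F y ^ (p + 1) := by
  have hmono := monotoneOn_Icc_of_hasDerivAt_nonneg hF hF'_nonneg
  have htaylor := add_mul_add_sq_le_of_le_second_deriv (D := β * F x ^ p) hxy hF hF'
    fun t ht => (mul_le_mul_of_nonneg_left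
      (rpow_le_rpow hFx.le (hmono ⟨le_rfl, hxy⟩ ht ht.1) hp) hβ).trans (hode t ht)
  set δ := β * F x ^ (p - 1) * (y - x) ^ 2 / 2 with hδ_def
  have hδ : 0 ≤ δ := by positivity
  have hgrowth : F x * (1 + δ) ≤ F y := by
    have hpow : β * F x ^ p / 2 * (y - x) ^ 2 = F x * δ := by
      rw [hδ_def, rpow_sub_one hFx.ne']
      field_simp
    have := mul_nonneg (hF'_nonneg x ⟨le_rfl, hxy⟩) (sub_nonneg.2 hxy)
    linarith
  have hbernoulli : 2 ≤ (1 + δ) ^ (p + 1) :=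
    (by rw [hδ_def]; linarith : 2 ≤ 1 + (p + 1) * δ).trans
      (one_add_mul_self_le_rpow_one_add (by linarith) (by linarith))
  calc 2 * F x ^ (p + 1) ≤ (1 + δ) ^ (p + 1) * F x ^ (p + 1) :=
        mul_le_mul_of_nonneg_right hbernoulli (rpow_nonneg hFx.le _)
    _ = (F x * (1 + δ)) ^ (p + 1) := by rw [mul_rpow hFx.le (by linarith), mul_comm]
    _ ≤ F y ^ (p + 1) := rpow_le_rpow (by positivity) hgrowth (by linarith)

theorem kato_blowup_bound {F F' F'' : ℝ → ℝ} {p β t₁ t₂ t₃ : ℝ} (hp : 1 < p) (hβ : 0 < β)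
    (h₁₂ : t₁ ≤ t₂) (h₂₃ : t₂ ≤ t₃) (hF : ∀ t ∈ Icc t₁ t₃, HasDerivAt F (F' t) t)
    (hF' : ∀ t ∈ Icc t₁ t₃, HasDerivAt F' (F'' t) t) (hF₁ : 0 < F t₁)
    (hF'_nonneg : ∀ t ∈ Icc t₁ t₃, 0 ≤ F' t) (hode : ∀ t ∈ Icc t₁ t₃, β * F t ^ p ≤ F'' t)
    (hlong : 2 ≤ (p + 1) * β * F t₁ ^ (p - 1) * (t₂ - t₁) ^ 2) :
    (p - 1) ^ 2 * β * F t₁ ^ (p - 1) * (t₃ - t₂) ^ 2 ≤ 4 * (p + 1) := by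
  have h₁₃ := h₁₂.trans h₂₃
  have hsub₁₂ : Icc t₁ t₂ ⊆ Icc t₁ t₃ := Icc_subset_Icc_right h₂₃
  have hsub₂₃ : Icc t₂ t₃ ⊆ Icc t₁ t₃ := Icc_subset_Icc_left h₁₂
  have hmono := monotoneOn_Icc_of_hasDerivAt_nonneg hF hF'_nonneg
  have hFpos : ∀ t ∈ Icc t₁ t₃, 0 < F t :=
    fun t ht => hF₁.trans_le (hmono ⟨le_rfl, h₁₃⟩ ht ht.1)
  have hdouble := two_mul_rpow_le_of_le_second_deriv (by linarith) hβ.le h₁₂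
    (fun t ht => hF t (hsub₁₂ ht)) (fun t ht => hF' t (hsub₁₂ ht)) hF₁
    (fun t ht => hF'_nonneg t (hsub₁₂ ht)) (fun t ht => hode t (hsub₁₂ ht)) hlong
  have henergy := monotoneOn_energy (by linarith) hF hF' hF'_nonneg hode
  set η := √(β / (p + 1))
  have hslope : ∀ t ∈ Icc t₂ t₃, η * F t ^ ((p - 1) / 2 + 1) ≤ F' t := by
    intro t ht
    have hE := henergy ⟨le_rfl, h₁₃⟩ (hsub₂₃ ht) (h₁₂.trans ht.1)
    have hF₂t : F t₂ ^ (p + 1) ≤ F t ^ (p + 1) := rpow_le_rpow (hFpos t₂ ⟨h₁₂, h₂₃⟩).le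
      (hmono ⟨h₁₂, h₂₃⟩ (hsub₂₃ ht) ht.1) (by linarith)
    have hκ : 0 ≤ 2 * β / (p + 1) := by positivity
    have hsq : (η * F t ^ ((p - 1) / 2 + 1)) ^ 2 ≤ F' t ^ 2 := by
      rw [mul_pow, sq_sqrt (by positivity), ← rpow_natCast, ← rpow_mul (hFpos t (hsub₂₃ ht)).le,
        show ((p - 1) / 2 + 1) * ((2 : ℕ) : ℝ) = p + 1 by push_cast; ring]
      have hhalf : β / (p + 1) * F t ^ (p + 1) = 2 * β / (p + 1) * F t ^ (p + 1) / 2 := by ring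
      dsimp only at hE
      linarith [mul_le_mul_of_nonneg_left (hdouble.trans hF₂t) hκ, sq_nonneg (F' t₁)]
    exact (pow_le_pow_iff_left₀
      (mul_nonneg (sqrt_nonneg _) (rpow_nonneg (hFpos t (hsub₂₃ ht)).le _))
      (hF'_nonneg t (hsub₂₃ ht)) two_ne_zero).1 hsq
  have hcomp := mul_sub_le_rpow_neg_of_rpow_le_deriv (by linarith) h₂₃
    (fun t ht => hF t (hsub₂₃ ht)) (fun t ht => hFpos t (hsub₂₃ ht)) hslope
  have hF₂₁ : F t₂ ^ (-((p - 1) / 2)) ≤ F t₁ ^ (-((p - 1) / 2)) :=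
    rpow_le_rpow_of_nonpos hF₁ (hmono ⟨le_rfl, h₁₃⟩ ⟨h₁₂, h₂₃⟩ h₁₂) (by linarith)
  have hsq := pow_le_pow_left₀ (by positivity) (hcomp.trans hF₂₁) 2
  have hinv : (F t₁ ^ (-((p - 1) / 2))) ^ 2 * F t₁ ^ (p - 1) = 1 := by
    rw [← rpow_natCast, ← rpow_mul hF₁.le, ← rpow_add hF₁]
    push_cast
    ring_nf
    exact rpow_zero _
  calc (p - 1) ^ 2 * β * F t₁ ^ (p - 1) * (t₃ - t₂) ^ 2
      = 4 * (p + 1) * (((p - 1) / 2 * η * (t₃ - t₂)) ^ 2 * F t₁ ^ (p - 1)) := by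
        rw [mul_pow, mul_pow, sq_sqrt (by positivity)]
        field_simp
        ring
    _ ≤ 4 * (p + 1) * ((F t₁ ^ (-((p - 1) / 2))) ^ 2 * F t₁ ^ (p - 1)) := by gcongr
    _ = 4 * (p + 1) := by rw [hinv, mul_one]

lemma hasDerivAt_deriv_of_contDiffOn {F : ℝ → ℝ} {s : Set ℝ} {t : ℝ}
    (hF : ContDiffOn ℝ 2 F s) (hs : s ∈ 𝓝 t) :
    HasDerivAt F (deriv F t) t ∧ HasDerivAt (deriv F) (deriv (deriv F) t) t := by
  have hU : ContDiffOn ℝ (1 + 1) F (interior s) := hF.mono interior_subset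
  rw [contDiffOn_succ_iff_deriv_of_isOpen isOpen_interior] at hU
  have ht : interior s ∈ 𝓝 t := isOpen_interior.mem_nhds (mem_interior_iff_mem_nhds.2 hs)
  exact ⟨(hU.1.differentiableAt ht).hasDerivAt,
    ((hU.2.2.differentiableOn one_ne_zero).differentiableAt ht).hasDerivAt⟩

lemma deriv_pos_of_deriv_deriv_nonneg {F : ℝ → ℝ} {a b t : ℝ} (hF : ContDiffOn ℝ 2 F (Ico a b))
    (ha : 0 < deriv F a) (hconvex : ∀ t ∈ Ioo a b, 0 ≤ deriv (deriv F) t) (ht : t ∈ Ico a b) :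
    0 < deriv F t := by
  have hcont : ContinuousOn (deriv F) (Ico a b) := by
    refine (hF.continuousOn_derivWithin (uniqueDiffOn_Ico a b) (by norm_num)).congr
      fun u hu => ?_
    rcases hu.1.eq_or_lt with rfl | hau
    · exact ((differentiableAt_of_deriv_ne_zero ha.ne').derivWithin
        (uniqueDiffOn_Ico _ b _ hu)).symm
    · exact (derivWithin_of_mem_nhds (Ico_mem_nhds hau hu.2)).symm
  have hmono : MonotoneOn (deriv F) (Ico a b) := by
    refine monotoneOn_of_hasDerivWithinAt_nonneg (f' := deriv (deriv F)) (convex_Ico a b) hcont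
      (fun u hu => ?_) (fun u hu => ?_)
    all_goals rw [interior_Ico] at hu
    · rw [interior_Ico]
      exact (hasDerivAt_deriv_of_contDiffOn hF (Ico_mem_nhds hu.1 hu.2)).2.hasDerivWithinAt
    · exact hconvex u hu
  exact ha.trans_le (hmono ⟨le_rfl, ht.1.trans_lt ht.2⟩ ht ht.1)

theorem kato_blowup_bound_of_contDiffOn {F : ℝ → ℝ} {p q B R T s t₁ t₂ t₃ : ℝ} (hp : 1 < p)
    (hq : 0 ≤ q) (hB : 0 < B) (hR : 0 ≤ R) (hF : ContDiffOn ℝ 2 F (Ico 0 T))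
    (hF'0 : 0 < deriv F 0)
    (hode : ∀ t ∈ Ico 0 T, B * (t + R) ^ (-q) * |F t| ^ p ≤ deriv (deriv F) t)
    (h₀₁ : 0 < t₁) (h₁₂ : t₁ ≤ t₂) (h₂₃ : t₂ ≤ t₃) (h₃ : t₃ < T) (hs : t₃ + R ≤ s)
    (hF₁ : 0 < F t₁) (hlong : 2 ≤ (p + 1) * (B * s ^ (-q)) * F t₁ ^ (p - 1) * (t₂ - t₁) ^ 2) :
    (p - 1) ^ 2 * (B * s ^ (-q)) * F t₁ ^ (p - 1) * (t₃ - t₂) ^ 2 ≤ 4 * (p + 1) := by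
  have hs₀ : 0 < s := by linarith
  have hIcc : ∀ t ∈ Icc t₁ t₃, t ∈ Ioo 0 T := fun t ht => ⟨h₀₁.trans_le ht.1, ht.2.trans_lt h₃⟩
  have hderiv : ∀ t ∈ Icc t₁ t₃, _ := fun t ht =>
    hasDerivAt_deriv_of_contDiffOn hF (Ico_mem_nhds (hIcc t ht).1 (hIcc t ht).2)
  have hconvex : ∀ t ∈ Ioo 0 T, 0 ≤ deriv (deriv F) t := fun t ht =>
    (mul_nonneg (mul_nonneg hB.le (rpow_nonneg (by linarith [ht.1]) _))
      (rpow_nonneg (abs_nonneg _) _)).trans (hode t (Ioo_subset_Ico_self ht))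
  refine kato_blowup_bound hp (by positivity) h₁₂ h₂₃ (fun t ht => (hderiv t ht).1)
    (fun t ht => (hderiv t ht).2) hF₁
    (fun t ht => (deriv_pos_of_deriv_deriv_nonneg hF hF'0 hconvex
      (Ioo_subset_Ico_self (hIcc t ht))).le) (fun t ht => ?_) hlong
  have hweight : s ^ (-q) ≤ (t + R) ^ (-q) :=
    rpow_le_rpow_of_nonpos (by linarith [(hIcc t ht).1]) (by linarith [ht.2]) (neg_nonpos.2 hq)
  calc B * s ^ (-q) * F t ^ p ≤ B * s ^ (-q) * |F t| ^ p :=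
        mul_le_mul_of_nonneg_left ((le_abs_self _).trans (abs_rpow_le_abs_rpow _ _))
          (by positivity)
    _ ≤ B * (t + R) ^ (-q) * |F t| ^ p := by gcongr
    _ ≤ deriv (deriv F) t := hode t (Ioo_subset_Ico_self (hIcc t ht))

lemma rpow_le_mul_rpow_of_mul_rpow_neg_le {A C e m t : ℝ} (hA : 0 < A) (hC : 0 ≤ C) (hm : 0 < m)
    (hCt : C * A ^ (-e / m) ≤ t) : C ^ m ≤ A ^ e * t ^ m := by
  have := rpow_le_rpow (by positivity) hCt hm.le
  rw [mul_rpow hC (by positivity), ← rpow_mul hA.le, div_mul_cancel₀ _ hm.ne', rpow_neg hA.le,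
    ← div_eq_mul_inv, div_le_iff₀ (by positivity)] at this
  linarith

lemma mul_rpow_le_of_le_mul_rpow_of_mul_rpow_neg_le {A B C M a k p q t x : ℝ} (hp : 1 ≤ p)
    (hM : 0 < M) (hM_def : M = (p - 1) / 2 * a - q / 2 + 1) (hA : 0 < A) (hB : 0 ≤ B)
    (hC : 0 ≤ C) (hk : 0 < k) (ht : 0 < t) (hx : A * t ^ a ≤ x)
    (hCt : C * A ^ (-(p - 1) / (2 * M)) ≤ t) :
    B * k ^ (-q) * C ^ (2 * M) ≤ B * (k * t) ^ (-q) * x ^ (p - 1) * t ^ 2 := by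
  have hx' : A ^ (p - 1) * t ^ (a * (p - 1)) ≤ x ^ (p - 1) := by
    have := rpow_le_rpow (by positivity) hx (by linarith : 0 ≤ p - 1)
    rwa [mul_rpow hA.le (by positivity), ← rpow_mul ht.le] at this
  have ht2M : t ^ (2 * M) = t ^ (-q) * t ^ (a * (p - 1)) * t ^ 2 := by
    rw [← rpow_natCast, ← rpow_add ht, ← rpow_add ht, hM_def]
    push_cast
    ring_nf
  calc B * k ^ (-q) * C ^ (2 * M)
      ≤ B * k ^ (-q) * (A ^ (p - 1) * t ^ (2 * M)) := by
        gcongr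
        exact rpow_le_mul_rpow_of_mul_rpow_neg_le hA hC (by positivity) hCt
    _ = B * k ^ (-q) * t ^ (-q) * (A ^ (p - 1) * t ^ (a * (p - 1))) * t ^ 2 := by
        rw [ht2M]; ring
    _ ≤ B * k ^ (-q) * t ^ (-q) * x ^ (p - 1) * t ^ 2 := by gcongr
    _ = B * (k * t) ^ (-q) * x ^ (p - 1) * t ^ 2 := by rw [mul_rpow hk.le ht.le]; ring

theorem improved_kato_lemma_general (p a q B : ℝ) (hp : 1 < p) (hq : 0 < q)
    (hB : 0 < B) (hM : 0 < (p - 1) / 2 * a - q / 2 + 1) :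
    ∃ C₀ > 0, ∀ A R T₀ T : ℝ, 0 < A → 0 < R → 0 < T₀ → 0 < T →
      ∀ F : ℝ → ℝ, ContDiffOn ℝ 2 F (Set.Ico 0 T) →
        (∀ t ∈ Set.Ico T₀ T, A * t ^ a ≤ F t) →
        (∀ t ∈ Set.Ico (0 : ℝ) T, B * (t + R) ^ (-q) * |F t| ^ p ≤ deriv (deriv F) t) →
        0 ≤ F 0 → 0 < deriv F 0 →
        C₀ * A ^ (-(p - 1) / (2 * ((p - 1) / 2 * a - q / 2 + 1)))
          ≤ max (max T₀ (F 0 / deriv F 0)) R →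
        T < 2 ^ ((2 : ℝ) / ((p - 1) / 2 * a - q / 2 + 1))
          * max (max T₀ (F 0 / deriv F 0)) R := by
  set M := (p - 1) / 2 * a - q / 2 + 1 with hM_def
  set b : ℝ := 2 ^ (1 / M)
  have hb : 1 < b := one_lt_rpow one_lt_two (by positivity)
  set ρ := B * (b * (1 + b)) ^ (-q)
  have hgrow := tendsto_rpow_atTop (by positivity : 0 < 2 * M)
  obtain ⟨C₀, hlong, hshort, hC₀⟩ := (((hgrow.const_mul_atTop
      (by positivity : 0 < (p + 1) * (b - 1) ^ 2 * ρ)).eventually_ge_atTop 2).and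
    (((hgrow.const_mul_atTop (by positivity : 0 < (p - 1) ^ 2 * (b * (b - 1) / 2) ^ 2 * ρ)
      ).eventually_gt_atTop (4 * (p + 1))).and (eventually_gt_atTop 0))).exists
  refine ⟨C₀, hC₀, fun A R T₀ T hA hR _ _ F hF hFA hode _ hF'0 hC₀T₁ => ?_⟩
  set T₁ := max (max T₀ (F 0 / deriv F 0)) R
  have hR₁ : R ≤ T₁ := le_max_right _ _
  have hT₁ : 0 < T₁ := hR.trans_le hR₁
  by_contra! hT_le
  rw [show (2 : ℝ) ^ (2 / M) = b ^ 2 by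
    rw [← rpow_natCast, ← rpow_mul zero_le_two]; congr 1; push_cast; ring] at hT_le
  have hFT₁ : A * T₁ ^ a ≤ F T₁ :=
    hFA T₁ ⟨(le_max_left _ _).trans (le_max_left _ _), by nlinarith⟩
  have hQ := mul_rpow_le_of_le_mul_rpow_of_mul_rpow_neg_le hp.le hM hM_def hA hB.le hC₀.le
    (by positivity : 0 < b * (1 + b)) hT₁ hFT₁ hC₀T₁
  have key := kato_blowup_bound_of_contDiffOn (t₂ := b * T₁) (t₃ := b * (1 + b) / 2 * T₁)
    (s := b * (1 + b) * T₁)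
    hp hq.le hB hR.le hF hF'0 hode hT₁ (by nlinarith) (by nlinarith) (by nlinarith)
    (by nlinarith) ((mul_pos hA (rpow_pos_of_pos hT₁ a)).trans_le hFT₁) ?_
  · nlinarith [mul_le_mul_of_nonneg_left hQ
      (by positivity : 0 ≤ (p - 1) ^ 2 * (b * (b - 1) / 2) ^ 2)]
  · nlinarith [mul_le_mul_of_nonneg_left hQ (by positivity : 0 ≤ (p + 1) * (b - 1) ^ 2)]

/-- Improved Kato lemma: blow-up criterion for second-order ordinary
differential inequalities, with lifespan upper bound. -/
theorem improved_kato_lemma (p a q B : ℝ) (hp : 1 < p) (ha : 0 < a) (hq : 0 < q)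
    (hB : 0 < B) (hM : 0 < (p - 1) / 2 * a - q / 2 + 1) :
    ∃ C₀ > 0, ∀ A R T₀ T : ℝ, 0 < A → 0 < R → 0 < T₀ → 0 < T →
      ∀ F : ℝ → ℝ, ContDiffOn ℝ 2 F (Set.Ico 0 T) →
        (∀ t ∈ Set.Ico T₀ T, A * t ^ a ≤ F t) →
        (∀ t ∈ Set.Ico (0 : ℝ) T, B * (t + R) ^ (-q) * |F t| ^ p ≤ deriv (deriv F) t) →
        0 ≤ F 0 → 0 < deriv F 0 →
        C₀ * A ^ (-(p - 1) / (2 * ((p - 1) / 2 * a - q / 2 + 1)))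
          ≤ max (max T₀ (F 0 / deriv F 0)) R →
        T < 2 ^ ((2 : ℝ) / ((p - 1) / 2 * a - q / 2 + 1))
          * max (max T₀ (F 0 / deriv F 0)) R :=
  improved_kato_lemma_general p a q B hp hq hB hM
end

section
/- Variant of the improved Kato lemma with vanishing initial derivative. Let p > 1, a > 0, q > 0 and B > 0, and set M := ((p-1)/2)·a − q/2 + 1, assumed to satisfy M > 0. Then there exists a positive constant C₀ = C₀(p, a, q, B) such that the following holds: for all A, R, T₀ > 0 and all T > 0, if F : [0, T) → ℝ is twice continuously differentiable and satisfies (i) F(t) ≥ A·t^a for all t ∈ [T₀, T), (ii) F''(t) ≥ B·(t + R)^{−q}·|F(t)|^p for all t ∈ [0, T), (iii) F(0) > 0 and F'(0) = 0, and (iv) there exists a time t₀ ∈ (0, T) such that F(t₀) ≥ 2·F(0), and if T₂ := max{T₀, t₀, R} satisfies T₂ ≥ C₀·A^{−(p−1)/(2M)}, then T < 2^{2/M}·T₂. -/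
/-!
Suppose `T ≥ 2^(2/M) T₂`. Since `F'' ≥ 0` and `F'(0) = 0`, `F` is nondecreasing and positive.
Multiplying `F'' ≥ B (t+R)^(-q) F^p` by `F' ≥ 0` and integrating over `[0, t]`, with the weight
frozen at its smallest value `(t+R)^(-q)`, gives
`F'(t)^2 ≥ 2B/(p+1) (t+R)^(-q) (F(t)^(p+1) - F(0)^(p+1))`. For `t ≥ T₂` we have `t + R ≤ 2t` and
`F(0) ≤ F(t)/2`, hence `F' ≥ κ t^(-q/2) F^((p+1)/2)`, i.e. `(F^(-(p-1)/2))' ≤ -(p-1)/2 κ t^(-q/2)`.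
Integrating from `T₂` to `ρ T₂` with `1 < ρ < 2^(2/M)` and using `F(T₂) ≥ A T₂^a` gives
`c T₂^M ≤ A^(-(p-1)/2)`, which the size condition on `T₂` rules out for `C₀ = (2/c)^(1/M)`.
-/

open Set

section Calculus

variable {f f' f'' : ℝ → ℝ} {a b : ℝ}

theorem ContDiffOn.hasDerivAt_of_mem_Ioo {n : WithTop ℕ∞} (hf : ContDiffOn ℝ n f (Ico a b))
    (hn : n ≠ 0) {x : ℝ} (hx : x ∈ Ioo a b) : HasDerivAt f (deriv f x) x :=
  ((hf.differentiableOn hn x (Ioo_subset_Ico_self hx)).differentiableAt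
    (Filter.mem_of_superset (isOpen_Ioo.mem_nhds hx) Ioo_subset_Ico_self)).hasDerivAt

theorem ContDiffOn.hasDerivAt_deriv_of_mem_Ioo (hf : ContDiffOn ℝ 2 f (Ico a b)) {x : ℝ}
    (hx : x ∈ Ioo a b) : HasDerivAt (deriv f) (deriv (deriv f) x) x :=
  (((hf.mono Ioo_subset_Ico_self).deriv_of_isOpen isOpen_Ioo (by norm_num)).differentiableOn
    one_ne_zero x hx |>.differentiableAt (isOpen_Ioo.mem_nhds hx)).hasDerivAt

theorem ContDiffOn.continuousOn_deriv_Ico (hf : ContDiffOn ℝ 2 f (Ico a b))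
    (ha : DifferentiableAt ℝ (deriv f) a) : ContinuousOn (deriv f) (Ico a b) := by
  intro x hx
  rcases eq_or_lt_of_le hx.1 with rfl | hax
  · exact ha.continuousAt.continuousWithinAt
  · exact (hf.hasDerivAt_deriv_of_mem_Ioo ⟨hax, hx.2⟩).continuousAt.continuousWithinAt

theorem ContDiffOn.deriv_nonneg_of_deriv_deriv_nonneg (hf : ContDiffOn ℝ 2 f (Ico a b))
    (ha : DifferentiableAt ℝ (deriv f) a) (ha0 : deriv f a = 0)
    (h : ∀ x ∈ Ioo a b, 0 ≤ deriv (deriv f) x) {x : ℝ} (hx : x ∈ Ico a b) : 0 ≤ deriv f x := by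
  have hmono : MonotoneOn (deriv f) (Ico a b) := by
    refine monotoneOn_of_deriv_nonneg (convex_Ico a b) (hf.continuousOn_deriv_Ico ha)
      (fun y hy => ?_) (fun y hy => ?_) <;> rw [interior_Ico] at hy
    · exact (hf.hasDerivAt_deriv_of_mem_Ioo hy).differentiableAt.differentiableWithinAt
    · exact h y hy
  simpa [ha0] using hmono (left_mem_Ico.2 (hx.1.trans_lt hx.2)) hx hx.1

theorem ContDiffOn.monotoneOn_of_deriv_nonneg_Ico {n : WithTop ℕ∞}
    (hf : ContDiffOn ℝ n f (Ico a b)) (hn : n ≠ 0) (h : ∀ x ∈ Ioo a b, 0 ≤ deriv f x) :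
    MonotoneOn f (Ico a b) := by
  refine monotoneOn_of_deriv_nonneg (convex_Ico a b) hf.continuousOn
    (fun y hy => ?_) (fun y hy => ?_) <;> rw [interior_Ico] at hy
  · exact (hf.hasDerivAt_of_mem_Ioo hn hy).differentiableAt.differentiableWithinAt
  · exact h y hy

theorem energy_inequality {k p : ℝ} (hab : a ≤ b) (hp : p + 1 ≠ 0)
    (hf : ContinuousOn f (Icc a b)) (hf' : ContinuousOn f' (Icc a b))
    (hfd : ∀ x ∈ Ioo a b, HasDerivAt f (f' x) x) (hf'd : ∀ x ∈ Ioo a b, HasDerivAt f' (f'' x) x)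
    (hpos : ∀ x ∈ Icc a b, 0 < f x) (hf'nonneg : ∀ x ∈ Ioo a b, 0 ≤ f' x)
    (h : ∀ x ∈ Ioo a b, k * f x ^ p ≤ f'' x) :
    2 * k / (p + 1) * (f b ^ (p + 1) - f a ^ (p + 1)) ≤ f' b ^ 2 - f' a ^ 2 := by
  have hmono : MonotoneOn (fun x => f' x ^ 2 - 2 * k / (p + 1) * f x ^ (p + 1)) (Icc a b) := by
    refine monotoneOn_of_hasDerivWithinAt_nonneg (f' := fun x => 2 * f' x * (f'' x - k * f x ^ p))
      (convex_Icc a b) ((hf'.pow 2).sub (continuousOn_const.mul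
        (hf.rpow_const fun x hx => Or.inl (hpos x hx).ne'))) (fun x hx => ?_) (fun x hx => ?_)
      <;> rw [interior_Icc] at hx
    · refine (((hf'd x hx).pow 2).sub (((hfd x hx).rpow_const
        (Or.inl (hpos x (Ioo_subset_Icc_self hx)).ne')).const_mul _)).hasDerivWithinAt.congr_deriv
        ?_
      rw [add_sub_cancel_right]
      field_simp
      push_cast
      ring
    · exact mul_nonneg (mul_nonneg zero_le_two (hf'nonneg x hx)) (sub_nonneg.2 (h x hx))
  have := hmono (left_mem_Icc.2 hab) (right_mem_Icc.2 hab) hab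
  simp only at this
  linarith

theorem mul_sub_le_rpow_neg_sub_rpow_neg {m r : ℝ} (hab : a ≤ b) (hr : 0 ≤ r)
    (hf : ContinuousOn f (Icc a b)) (hfd : ∀ x ∈ Ioo a b, HasDerivAt f (f' x) x)
    (hpos : ∀ x ∈ Icc a b, 0 < f x) (h : ∀ x ∈ Ioo a b, m * f x ^ (1 + r) ≤ f' x) :
    r * m * (b - a) ≤ f a ^ (-r) - f b ^ (-r) := by
  have hmono : MonotoneOn (fun x => -f x ^ (-r) - r * m * x) (Icc a b) := by
    refine monotoneOn_of_hasDerivWithinAt_nonneg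
      (f' := fun x => r * (f' x - m * f x ^ (1 + r)) * f x ^ (-r - 1)) (convex_Icc a b)
      ((hf.rpow_const fun x hx => Or.inl (hpos x hx).ne').neg.sub
        (continuousOn_const.mul continuousOn_id)) (fun x hx => ?_) (fun x hx => ?_)
      <;> rw [interior_Icc] at hx <;> have hfx := hpos x (Ioo_subset_Icc_self hx)
    · refine (((hfd x hx).rpow_const (Or.inl hfx.ne')).neg.sub
        ((hasDerivAt_id x).const_mul _)).hasDerivWithinAt.congr_deriv ?_
      have hcancel : f x ^ (1 + r) * f x ^ (-r - 1) = 1 := by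
        rw [← Real.rpow_add hfx, show 1 + r + (-r - 1) = 0 by ring, Real.rpow_zero]
      linear_combination r * m * hcancel
    · exact mul_nonneg (mul_nonneg hr (sub_nonneg.2 (h x hx))) (Real.rpow_nonneg hfx.le _)
  have := hmono (left_mem_Icc.2 hab) (right_mem_Icc.2 hab) hab
  simp only at this
  linarith

end Calculus

theorem lt_mul_rpow_inv_of_mul_rpow_le {c X Y N : ℝ} (hc : 0 < c) (hX : 0 ≤ X) (hY : 0 < Y)
    (hN : 0 < N) (h : c * X ^ N ≤ Y) : X < (2 / c) ^ N⁻¹ * Y ^ N⁻¹ := by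
  rw [← Real.mul_rpow (by positivity) hY.le, Real.lt_rpow_inv_iff_of_pos hX (by positivity) hN]
  calc X ^ N ≤ Y / c := by rw [le_div_iff₀ hc]; linarith
    _ < 2 / c * Y := by rw [div_mul_eq_mul_div]; gcongr; linarith

structure IsKatoSupersolution (B p q R T : ℝ) (F : ℝ → ℝ) : Prop where
  contDiffOn : ContDiffOn ℝ 2 F (Ico 0 T)
  le_deriv_deriv : ∀ t ∈ Ico 0 T, B * (t + R) ^ (-q) * |F t| ^ p ≤ deriv (deriv F) t
  pos_zero : 0 < F 0
  deriv_zero : deriv F 0 = 0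

/-- The rate in the first-order inequality `F' ≥ katoRate * t ^ (-q/2) * F ^ ((p+1)/2)`: the
factor `2B/(p+1)` comes from integrating `F'' F'`, `1 - 2^(-(p+1))` from `F 0 ≤ F t / 2`, and
`2^(-q)` from `t + R ≤ 2t`. -/
noncomputable def katoRate (B p q : ℝ) : ℝ :=
  √(2 * B / (p + 1) * (1 - 2 ^ (-(p + 1))) * 2 ^ (-q))

theorem katoRate_pos {B p q : ℝ} (hB : 0 < B) (hp : 1 < p) : 0 < katoRate B p q :=
  Real.sqrt_pos.2 (mul_pos (mul_pos (by apply div_pos <;> linarith)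
    (sub_pos.2 (Real.rpow_lt_one_of_one_lt_of_neg one_lt_two (by linarith)))) (by positivity))

namespace IsKatoSupersolution

variable {B p q R T : ℝ} {F : ℝ → ℝ}

theorem deriv_deriv_nonneg (h : IsKatoSupersolution B p q R T F) (hB : 0 ≤ B) (hR : 0 ≤ R)
    {t : ℝ} (ht : t ∈ Ico 0 T) : 0 ≤ deriv (deriv F) t :=
  (mul_nonneg (mul_nonneg hB (Real.rpow_nonneg (by linarith [ht.1]) _))
    (Real.rpow_nonneg (abs_nonneg _) _)).trans (h.le_deriv_deriv t ht)

-- `F` is only `C²` on `[0, T)`; continuity of `F'` at the endpoint comes from `F''(0) > 0`.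
theorem differentiableAt_deriv_zero (h : IsKatoSupersolution B p q R T F) (hB : 0 < B)
    (hR : 0 < R) (hT : 0 < T) : DifferentiableAt ℝ (deriv F) 0 := by
  refine differentiableAt_of_deriv_ne_zero (ne_of_gt (lt_of_lt_of_le ?_
    (h.le_deriv_deriv 0 ⟨le_rfl, hT⟩)))
  have := h.pos_zero
  positivity

theorem deriv_nonneg (h : IsKatoSupersolution B p q R T F) (hB : 0 < B) (hR : 0 < R)
    {t : ℝ} (ht : t ∈ Ico 0 T) : 0 ≤ deriv F t :=
  h.contDiffOn.deriv_nonneg_of_deriv_deriv_nonneg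
    (h.differentiableAt_deriv_zero hB hR (ht.1.trans_lt ht.2)) h.deriv_zero
    (fun _ hs => h.deriv_deriv_nonneg hB.le hR.le (Ioo_subset_Ico_self hs)) ht

theorem monotoneOn (h : IsKatoSupersolution B p q R T F) (hB : 0 < B) (hR : 0 < R) :
    MonotoneOn F (Ico 0 T) :=
  h.contDiffOn.monotoneOn_of_deriv_nonneg_Ico two_ne_zero
    (fun _ hs => h.deriv_nonneg hB hR (Ioo_subset_Ico_self hs))

theorem pos (h : IsKatoSupersolution B p q R T F) (hB : 0 < B) (hR : 0 < R)
    {t : ℝ} (ht : t ∈ Ico 0 T) : 0 < F t :=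
  h.pos_zero.trans_le (h.monotoneOn hB hR ⟨le_rfl, ht.1.trans_lt ht.2⟩ ht ht.1)

theorem energy_inequality (h : IsKatoSupersolution B p q R T F) (hB : 0 < B) (hR : 0 < R)
    (hp : p + 1 ≠ 0) (hq : 0 ≤ q) {t : ℝ} (ht : t ∈ Ioo 0 T) :
    2 * (B * (t + R) ^ (-q)) / (p + 1) * (F t ^ (p + 1) - F 0 ^ (p + 1)) ≤ deriv F t ^ 2 := by
  have hsub : Icc 0 t ⊆ Ico 0 T := Icc_subset_Ico_right ht.2
  have hsubo : Ioo 0 t ⊆ Ioo 0 T := Ioo_subset_Ioo_right ht.2.le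
  have := _root_.energy_inequality (f'' := deriv (deriv F)) (k := B * (t + R) ^ (-q)) ht.1.le hp
    (h.contDiffOn.continuousOn.mono hsub)
    ((h.contDiffOn.continuousOn_deriv_Ico
      (h.differentiableAt_deriv_zero hB hR (ht.1.trans ht.2))).mono hsub)
    (fun s hs => h.contDiffOn.hasDerivAt_of_mem_Ioo two_ne_zero (hsubo hs))
    (fun s hs => h.contDiffOn.hasDerivAt_deriv_of_mem_Ioo (hsubo hs))
    (fun s hs => h.pos hB hR (hsub hs))
    (fun s hs => h.deriv_nonneg hB hR (Ioo_subset_Ico_self (hsubo hs))) (fun s hs => ?_)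
  · rwa [h.deriv_zero, zero_pow two_ne_zero, sub_zero] at this
  · have hFs := h.pos hB hR (Ioo_subset_Ico_self (hsubo hs))
    calc B * (t + R) ^ (-q) * F s ^ p ≤ B * (s + R) ^ (-q) * |F s| ^ p := by
          rw [abs_of_pos hFs]
          gcongr B * ?_ * _
          exact Real.rpow_le_rpow_of_nonpos (by linarith [hs.1]) (by linarith [hs.2]) (by linarith)
      _ ≤ deriv (deriv F) s := h.le_deriv_deriv s (Ioo_subset_Ico_self (hsubo hs))

theorem katoRate_mul_le_deriv (h : IsKatoSupersolution B p q R T F) (hB : 0 < B) (hR : 0 < R)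
    (hp : 1 < p) (hq : 0 ≤ q) {t : ℝ} (ht : t ∈ Ioo 0 T) (hRt : R ≤ t)
    (h2 : 2 * F 0 ≤ F t) : katoRate B p q * t ^ (-(q / 2)) * F t ^ ((p + 1) / 2) ≤ deriv F t := by
  have hp' : 0 < p + 1 := by linarith
  have hFt := h.pos hB hR (Ioo_subset_Ico_self ht)
  have hweight : 2 ^ (-q) * t ^ (-q) ≤ (t + R) ^ (-q) := by
    rw [← Real.mul_rpow zero_le_two ht.1.le]
    exact Real.rpow_le_rpow_of_nonpos (by linarith [ht.1]) (by linarith) (by linarith)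
  have hinit : F 0 ^ (p + 1) ≤ 2 ^ (-(p + 1)) * F t ^ (p + 1) := by
    rw [Real.rpow_neg zero_le_two, ← div_eq_inv_mul, ← Real.div_rpow hFt.le zero_le_two]
    exact Real.rpow_le_rpow h.pos_zero.le (by linarith) hp'.le
  have hsmall : (2 : ℝ) ^ (-(p + 1)) < 1 :=
    Real.rpow_lt_one_of_one_lt_of_neg one_lt_two (by linarith)
  have hsq : (katoRate B p q * t ^ (-(q / 2)) * F t ^ ((p + 1) / 2)) ^ 2 =
      2 * B / (p + 1) * (2 ^ (-q) * t ^ (-q)) * ((1 - 2 ^ (-(p + 1))) * F t ^ (p + 1)) := by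
    have hc : 0 ≤ 2 * B / (p + 1) * (1 - 2 ^ (-(p + 1))) * 2 ^ (-q) :=
      mul_nonneg (mul_nonneg (div_nonneg (by positivity) hp'.le) (by linarith)) (by positivity)
    rw [mul_pow, mul_pow, katoRate, Real.sq_sqrt hc, ← Real.rpow_mul_natCast ht.1.le,
      ← Real.rpow_mul_natCast hFt.le]
    ring_nf
  refine (pow_le_pow_iff_left₀ (mul_nonneg (mul_nonneg (katoRate_pos hB (by linarith)).le
    (Real.rpow_nonneg ht.1.le _)) (Real.rpow_nonneg hFt.le _))
    (h.deriv_nonneg hB hR (Ioo_subset_Ico_self ht)) two_ne_zero).1 ?_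
  rw [hsq]
  calc 2 * B / (p + 1) * (2 ^ (-q) * t ^ (-q)) * ((1 - 2 ^ (-(p + 1))) * F t ^ (p + 1))
      ≤ 2 * B / (p + 1) * (t + R) ^ (-q) * (F t ^ (p + 1) - F 0 ^ (p + 1)) := by
        refine mul_le_mul (mul_le_mul_of_nonneg_left hweight (div_nonneg (by positivity) hp'.le))
          (by linarith) (mul_nonneg (by linarith) (by positivity))
          (mul_nonneg (div_nonneg (by positivity) hp'.le)
            (Real.rpow_nonneg (by linarith [ht.1]) _))
    _ = 2 * (B * (t + R) ^ (-q)) / (p + 1) * (F t ^ (p + 1) - F 0 ^ (p + 1)) := by ring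
    _ ≤ deriv F t ^ 2 := h.energy_inequality hB hR hp'.ne' hq ht

theorem mul_sub_le_rpow_neg (h : IsKatoSupersolution B p q R T F) (hB : 0 < B) (hR : 0 < R)
    (hp : 1 < p) (hq : 0 ≤ q) {T₂ t : ℝ} (hT₂ : 0 < T₂) (hRT₂ : R ≤ T₂) (h2 : 2 * F 0 ≤ F T₂)
    (hT₂t : T₂ ≤ t) (ht : t < T) :
    (p - 1) / 2 * (katoRate B p q * t ^ (-(q / 2))) * (t - T₂) ≤ F T₂ ^ (-((p - 1) / 2)) := by
  have hsub : Icc T₂ t ⊆ Ico 0 T := fun s hs => ⟨hT₂.le.trans hs.1, hs.2.trans_lt ht⟩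
  have hsubo : Ioo T₂ t ⊆ Ioo 0 T := fun s hs => ⟨hT₂.trans hs.1, hs.2.trans ht⟩
  have key := mul_sub_le_rpow_neg_sub_rpow_neg (f' := deriv F)
    (m := katoRate B p q * t ^ (-(q / 2))) hT₂t (by linarith : 0 ≤ (p - 1) / 2)
    (h.contDiffOn.continuousOn.mono hsub)
    (fun s hs => h.contDiffOn.hasDerivAt_of_mem_Ioo two_ne_zero (hsubo hs))
    (fun s hs => h.pos hB hR (hsub hs)) (fun s hs => ?_)
  · have := Real.rpow_nonneg (h.pos hB hR (hsub (right_mem_Icc.2 hT₂t))).le (-((p - 1) / 2))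
    linarith
  · have hT₂s : T₂ ≤ s := hs.1.le
    rw [show 1 + (p - 1) / 2 = (p + 1) / 2 by ring]
    calc katoRate B p q * t ^ (-(q / 2)) * F s ^ ((p + 1) / 2)
        ≤ katoRate B p q * s ^ (-(q / 2)) * F s ^ ((p + 1) / 2) := by
          have := (h.pos hB hR (hsub (Ioo_subset_Icc_self hs))).le
          gcongr katoRate B p q * ?_ * _
          · exact (katoRate_pos hB hp).le
          · exact Real.rpow_le_rpow_of_nonpos (hsubo hs).1 hs.2.le (by linarith)
      _ ≤ deriv F s := h.katoRate_mul_le_deriv hB hR hp hq (hsubo hs) (hRT₂.trans hT₂s)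
          (h2.trans (h.monotoneOn hB hR (hsub (left_mem_Icc.2 hT₂t))
            (hsub (Ioo_subset_Icc_self hs)) hT₂s))

end IsKatoSupersolution

theorem mul_rpow_le_of_mul_sub_le {r κ q a ρ A X : ℝ} (hX : 0 < X) (hρ : 0 < ρ) (hA : 0 < A)
    (h : r * (κ * (ρ * X) ^ (-(q / 2))) * (ρ * X - X) ≤ (A * X ^ a) ^ (-r)) :
    r * κ * ρ ^ (-(q / 2)) * (ρ - 1) * X ^ (r * a - q / 2 + 1) ≤ A ^ (-r) := by
  have hXa : 0 < X ^ (r * a) := Real.rpow_pos_of_pos hX _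
  calc r * κ * ρ ^ (-(q / 2)) * (ρ - 1) * X ^ (r * a - q / 2 + 1)
      = r * (κ * (ρ * X) ^ (-(q / 2))) * (ρ * X - X) * X ^ (r * a) := by
        rw [Real.mul_rpow hρ.le hX.le, show r * a - q / 2 + 1 = r * a + -(q / 2) + 1 by ring,
          Real.rpow_add hX, Real.rpow_add hX, Real.rpow_one]
        ring
    _ ≤ (A * X ^ a) ^ (-r) * X ^ (r * a) := by gcongr
    _ = A ^ (-r) := by
        rw [Real.mul_rpow hA.le (Real.rpow_nonneg hX.le _), ← Real.rpow_mul hX.le, mul_assoc,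
          ← Real.rpow_add hX, show a * -r + r * a = 0 by ring, Real.rpow_zero, mul_one]

theorem improved_kato_lemma_variant_general (p a q B : ℝ) (hp : 1 < p) (hq : 0 < q)
    (hB : 0 < B) (hM : 0 < (p - 1) / 2 * a - q / 2 + 1) :
    ∃ C₀ > 0, ∀ A R T₀ T : ℝ, 0 < A → 0 < R → 0 < T₀ → 0 < T →
      ∀ F : ℝ → ℝ, ContDiffOn ℝ 2 F (Set.Ico 0 T) →
        (∀ t ∈ Set.Ico T₀ T, A * t ^ a ≤ F t) →
        (∀ t ∈ Set.Ico (0 : ℝ) T, B * (t + R) ^ (-q) * |F t| ^ p ≤ deriv (deriv F) t) →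
        0 < F 0 → deriv F 0 = 0 →
        ∀ t₀ ∈ Set.Ioo (0 : ℝ) T, 2 * F 0 ≤ F t₀ →
        C₀ * A ^ (-(p - 1) / (2 * ((p - 1) / 2 * a - q / 2 + 1)))
          ≤ max (max T₀ t₀) R →
        T < 2 ^ ((2 : ℝ) / ((p - 1) / 2 * a - q / 2 + 1)) * max (max T₀ t₀) R := by
  set M := (p - 1) / 2 * a - q / 2 + 1
  set L : ℝ := 2 ^ ((2 : ℝ) / M)
  have hL : 1 < L := Real.one_lt_rpow one_lt_two (by positivity)
  obtain ⟨ρ, hρ1, hρL⟩ := exists_between hL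
  set c := (p - 1) / 2 * katoRate B p q * ρ ^ (-(q / 2)) * (ρ - 1)
  have hc : 0 < c := mul_pos (mul_pos (mul_pos (by linarith) (katoRate_pos hB hp))
    (Real.rpow_pos_of_pos (by linarith) _)) (by linarith)
  refine ⟨(2 / c) ^ M⁻¹, by positivity, ?_⟩
  intro A R T₀ T hA hR _ _ F hF hlow hineq hF0 hF'0 t₀ ht₀ h2F0 hsize
  by_contra! hTbig
  set T₂ := max (max T₀ t₀) R
  have hsol : IsKatoSupersolution B p q R T F := ⟨hF, hineq, hF0, hF'0⟩
  have hT₂ : 0 < T₂ := hR.trans_le (le_max_right _ _)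
  have hρT : ρ * T₂ < T := (mul_lt_mul_of_pos_right hρL hT₂).trans_le hTbig
  have hT₂T : T₂ < T := (lt_mul_of_one_lt_left hT₂ hL).trans_le hTbig
  have h2 : 2 * F 0 ≤ F T₂ := h2F0.trans (hsol.monotoneOn hB hR ⟨ht₀.1.le, ht₀.2⟩
    ⟨hT₂.le, hT₂T⟩ ((le_max_right _ _).trans (le_max_left _ _)))
  have hbound : c * T₂ ^ M ≤ A ^ (-((p - 1) / 2)) := by
    refine mul_rpow_le_of_mul_sub_le hT₂ (by linarith) hA
      ((hsol.mul_sub_le_rpow_neg hB hR hp hq.le hT₂ (le_max_right _ _) h2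
        (le_mul_of_one_le_left hT₂.le hρ1.le) hρT).trans
        (Real.rpow_le_rpow_of_nonpos (by positivity) ?_ (by linarith)))
    exact hlow T₂ ⟨(le_max_left _ _).trans (le_max_left _ _), hT₂T⟩
  have := lt_mul_rpow_inv_of_mul_rpow_le hc hT₂.le (by positivity) hM hbound
  rw [← Real.rpow_mul hA.le, show -((p - 1) / 2) * M⁻¹ = -(p - 1) / (2 * M) by field_simp] at this
  linarith

/-- Variant of the improved Kato lemma with vanishing initial derivative. -/
theorem improved_kato_lemma_variant (p a q B : ℝ) (hp : 1 < p) (ha : 0 < a) (hq : 0 < q)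
    (hB : 0 < B) (hM : 0 < (p - 1) / 2 * a - q / 2 + 1) :
    ∃ C₀ > 0, ∀ A R T₀ T : ℝ, 0 < A → 0 < R → 0 < T₀ → 0 < T →
      ∀ F : ℝ → ℝ, ContDiffOn ℝ 2 F (Set.Ico 0 T) →
        (∀ t ∈ Set.Ico T₀ T, A * t ^ a ≤ F t) →
        (∀ t ∈ Set.Ico (0 : ℝ) T, B * (t + R) ^ (-q) * |F t| ^ p ≤ deriv (deriv F) t) →
        0 < F 0 → deriv F 0 = 0 →
        ∀ t₀ ∈ Set.Ioo (0 : ℝ) T, 2 * F 0 ≤ F t₀ →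
        C₀ * A ^ (-(p - 1) / (2 * ((p - 1) / 2 * a - q / 2 + 1)))
          ≤ max (max T₀ t₀) R →
        T < 2 ^ ((2 : ℝ) / ((p - 1) / 2 * a - q / 2 + 1)) * max (max T₀ t₀) R :=
  improved_kato_lemma_variant_general p a q B hp hq hB hM
end

section
/- ODE blow-up with lifespan estimate, vanishing initial velocity. Let p > 1 and c₀ > 0. Then there exist positive constants ε₀ and C, depending only on p and c₀, such that for every ε ∈ (0, ε₀] and every T > 0 the following holds: if F : [0, T) → ℝ is twice continuously differentiable with F(0) = ε·c₀, F'(0) = 0, and F''(t) ≥ |F(t)|^p for all t ∈ [0, T), then T ≤ C·ε^{−(p−1)/2}. -/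
/-!
Since `F'' ≥ |F|^p ≥ 0` and `F'(0) = 0`, `F` is nondecreasing. Once `F ≥ M > 0` from time
`s` on, `F'' ≥ M^p` there, so `F` at least doubles within the time `√2 · M^((1-p)/2)`. These
doubling times form a geometric series of ratio `2^((1-p)/2) < 1`, so `F` would be unbounded
before the finite time `√2 · F(0)^((1-p)/2) / (1 - 2^((1-p)/2))`; hence `T` is at most this,
which is of order `ε^(-(p-1)/2)`.
-/

open Set

/-- `deriv F a` is the two-sided derivative, which `ContDiffOn ℝ 2 F (Ico a b)` does not
control. -/
structure RegularOnIco (F : ℝ → ℝ) (a b : ℝ) : Prop where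
  continuousOn : ContinuousOn F (Ico a b)
  differentiableOn : DifferentiableOn ℝ F (Ioo a b)
  continuousOn_deriv : ContinuousOn (deriv F) (Ico a b)
  differentiableOn_deriv : DifferentiableOn ℝ (deriv F) (Ioo a b)

namespace RegularOnIco

variable {F : ℝ → ℝ} {a b m : ℝ}

theorem of_contDiffOn (hF : ContDiffOn ℝ 2 F (Ico a b)) (ha : DifferentiableAt ℝ (deriv F) a) :
    RegularOnIco F a b := by
  have hF' : ContDiffOn ℝ 2 F (Ioo a b) := hF.mono Ioo_subset_Ico_self
  have hderiv : DifferentiableOn ℝ (deriv F) (Ioo a b) :=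
    (hF'.deriv_of_isOpen isOpen_Ioo (m := 1) le_rfl).differentiableOn one_ne_zero
  refine ⟨hF.continuousOn, hF'.differentiableOn two_ne_zero, ?_, hderiv⟩
  intro x hx
  rcases hx.1.eq_or_lt with rfl | hax
  · exact ha.continuousAt.continuousWithinAt
  · exact ((hderiv x ⟨hax, hx.2⟩).differentiableAt
      (isOpen_Ioo.mem_nhds ⟨hax, hx.2⟩)).continuousAt.continuousWithinAt

theorem mono (h : RegularOnIco F a b) {a' : ℝ} (ha : a ≤ a') : RegularOnIco F a' b :=
  ⟨h.continuousOn.mono (Ico_subset_Ico_left ha), h.differentiableOn.mono (Ioo_subset_Ioo_left ha),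
    h.continuousOn_deriv.mono (Ico_subset_Ico_left ha),
    h.differentiableOn_deriv.mono (Ioo_subset_Ioo_left ha)⟩

theorem add_mul_sub_le_deriv (h : RegularOnIco F a b)
    (hm : ∀ x ∈ Ioo a b, m ≤ deriv (deriv F) x) {x : ℝ} (hx : x ∈ Ico a b) :
    deriv F a + m * (x - a) ≤ deriv F x := by
  have := (convex_Ico a b).mul_sub_le_image_sub_of_le_deriv h.continuousOn_deriv
    (by rw [interior_Ico]; exact h.differentiableOn_deriv) (by rwa [interior_Ico])
    a (left_mem_Ico.2 (hx.1.trans_lt hx.2)) x hx hx.1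
  linarith

theorem add_deriv_mul_add_mul_sq_le (h : RegularOnIco F a b)
    (hm : ∀ x ∈ Ioo a b, m ≤ deriv (deriv F) x) {x : ℝ} (hx : x ∈ Ico a b) :
    F a + deriv F a * (x - a) + m * (x - a) ^ 2 / 2 ≤ F x := by
  set g : ℝ → ℝ := fun y => F y - deriv F a * y - m * (y - a) ^ 2 / 2
  have hg : ∀ y ∈ Ioo a b, HasDerivAt g (deriv F y - deriv F a - m * (y - a)) y := by
    intro y hy
    have hFy := ((h.differentiableOn y hy).differentiableAt (isOpen_Ioo.mem_nhds hy)).hasDerivAt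
    refine ((hFy.fun_sub ((hasDerivAt_id' y).const_mul (deriv F a))).fun_sub
      ((((hasDerivAt_id' y).sub_const a).fun_pow 2).const_mul m |>.div_const 2)).congr_deriv ?_
    ring
  have hmono : MonotoneOn g (Ico a b) := by
    refine monotoneOn_of_deriv_nonneg (convex_Ico a b)
      (h.continuousOn.sub (by fun_prop) |>.sub (by fun_prop)) ?_ ?_ <;> rw [interior_Ico]
    · exact fun y hy => (hg y hy).differentiableAt.differentiableWithinAt
    · intro y hy
      rw [(hg y hy).deriv]
      linarith [h.add_mul_sub_le_deriv hm (Ioo_subset_Ico_self hy)]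
  have := hmono (left_mem_Ico.2 (hx.1.trans_lt hx.2)) hx hx.1
  simp only [g, sub_self] at this
  linarith

theorem monotoneOn (h : RegularOnIco F a b) (h₀ : 0 ≤ deriv F a)
    (hF'' : ∀ x ∈ Ioo a b, 0 ≤ deriv (deriv F) x) : MonotoneOn F (Ico a b) := by
  refine monotoneOn_of_deriv_nonneg (convex_Ico a b) h.continuousOn ?_ ?_ <;> rw [interior_Ico]
  · exact h.differentiableOn
  · intro x hx
    linarith [h.add_mul_sub_le_deriv hF'' (Ioo_subset_Ico_self hx)]

end RegularOnIco

/-- Where `F ≥ M`, `F'' ≥ M^p`, so `F` gains `M^p t² / 2 = M` within this time `t`. -/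
noncomputable def doublingTime (p M : ℝ) : ℝ := √2 * M ^ ((1 - p) / 2)

/-- The sum of the doubling times along `M, 2M, 4M, …`, a geometric series. -/
noncomputable def lifespanBound (p M : ℝ) : ℝ := doublingTime p M / (1 - 2 ^ ((1 - p) / 2))

section Arithmetic

variable {p M : ℝ}

theorem doublingTime_nonneg (hM : 0 ≤ M) : 0 ≤ doublingTime p M := by
  unfold doublingTime
  positivity

theorem rpow_mul_doublingTime_sq_div_two (hM : 0 < M) :
    M ^ p * doublingTime p M ^ 2 / 2 = M := by
  rw [doublingTime, mul_pow, Real.sq_sqrt zero_le_two, ← Real.rpow_natCast,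
    ← Real.rpow_mul hM.le, mul_left_comm, ← Real.rpow_add hM]
  norm_num

theorem doublingTime_mul {ε : ℝ} (hε : 0 ≤ ε) (hM : 0 ≤ M) :
    doublingTime p (ε * M) = ε ^ ((1 - p) / 2) * doublingTime p M := by
  rw [doublingTime, doublingTime, Real.mul_rpow hε hM]
  ring

theorem lifespanBound_mul {ε : ℝ} (hε : 0 ≤ ε) (hM : 0 ≤ M) :
    lifespanBound p (ε * M) = ε ^ ((1 - p) / 2) * lifespanBound p M := by
  rw [lifespanBound, lifespanBound, doublingTime_mul hε hM, mul_div_assoc]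

theorem two_rpow_one_sub_div_two_lt_one (hp : 1 < p) : (2 : ℝ) ^ ((1 - p) / 2) < 1 :=
  Real.rpow_lt_one_of_one_lt_of_neg one_lt_two (by linarith)

theorem lifespanBound_pos (hp : 1 < p) (hM : 0 < M) : 0 < lifespanBound p M :=
  div_pos (mul_pos (by positivity) (Real.rpow_pos_of_pos hM _))
    (sub_pos.2 (two_rpow_one_sub_div_two_lt_one hp))

theorem doublingTime_add_lifespanBound_two_mul (hp : 1 < p) (hM : 0 ≤ M) :
    doublingTime p M + lifespanBound p (2 * M) = lifespanBound p M := by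
  have hρ : 1 - (2 : ℝ) ^ ((1 - p) / 2) ≠ 0 :=
    (sub_pos.2 (two_rpow_one_sub_div_two_lt_one hp)).ne'
  rw [lifespanBound, lifespanBound, doublingTime_mul zero_le_two hM]
  field_simp
  ring

end Arithmetic

namespace RegularOnIco

variable {F : ℝ → ℝ} {a b p M : ℝ}

theorem two_mul_le_doublingTime (h : RegularOnIco F a b) (hp : 0 ≤ p) (h₀ : 0 ≤ deriv F a)
    (hF : ∀ x ∈ Ioo a b, |F x| ^ p ≤ deriv (deriv F) x) (hM : 0 < M) (hMF : M ≤ F a)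
    (hb : a + doublingTime p M < b) : 2 * M ≤ F (a + doublingTime p M) := by
  set τ := doublingTime p M
  have hτ : 0 ≤ τ := doublingTime_nonneg hM.le
  have hmono := h.monotoneOn h₀ fun x hx => (Real.rpow_nonneg (abs_nonneg _) p).trans (hF x hx)
  have hF'' : ∀ x ∈ Ioo a b, M ^ p ≤ deriv (deriv F) x := fun x hx =>
    calc M ^ p ≤ |F x| ^ p := by
          refine Real.rpow_le_rpow hM.le ?_ hp
          exact hMF.trans ((hmono (left_mem_Ico.2 (hx.1.trans hx.2))
            (Ioo_subset_Ico_self hx) hx.1.le).trans (le_abs_self _))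
      _ ≤ deriv (deriv F) x := hF x hx
  have hquad := h.add_deriv_mul_add_mul_sq_le hF'' (x := a + τ) ⟨by linarith, hb⟩
  rw [add_sub_cancel_left, rpow_mul_doublingTime_sq_div_two hM] at hquad
  linarith [mul_nonneg h₀ hτ]

theorem two_pow_mul_le (h : RegularOnIco F a b) (hp : 1 < p) (h₀ : 0 ≤ deriv F a)
    (hF : ∀ x ∈ Ioo a b, |F x| ^ p ≤ deriv (deriv F) x) (hM : 0 < M) (hMF : M ≤ F a)
    (hb : a + lifespanBound p M < b) (k : ℕ) : 2 ^ k * M ≤ F (a + lifespanBound p M) := by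
  induction k generalizing a M with
  | zero =>
    have hmono := h.monotoneOn h₀ fun x hx => (Real.rpow_nonneg (abs_nonneg _) p).trans (hF x hx)
    have hL := lifespanBound_pos hp hM
    rw [pow_zero, one_mul]
    exact hMF.trans (hmono (left_mem_Ico.2 (by linarith)) ⟨by linarith, hb⟩ (by linarith))
  | succ k ih =>
    set a' := a + doublingTime p M
    have hsplit := doublingTime_add_lifespanBound_two_mul hp hM.le
    have hL := lifespanBound_pos hp (mul_pos two_pos hM)
    have ha' : a ≤ a' := le_add_of_nonneg_right (doublingTime_nonneg hM.le)
    have hb' : a' + lifespanBound p (2 * M) < b := by rw [add_assoc, hsplit]; exact hb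
    have h₀' : 0 ≤ deriv F a' := by
      have := h.add_mul_sub_le_deriv (m := 0)
        (fun x hx => (Real.rpow_nonneg (abs_nonneg _) p).trans (hF x hx)) ⟨ha', by linarith⟩
      linarith
    have hdouble := h.two_mul_le_doublingTime (by linarith) h₀ hF hM hMF (by linarith)
    have := ih (h.mono ha') h₀' (fun x hx => hF x ⟨ha'.trans_lt hx.1, hx.2⟩)
      (mul_pos two_pos hM) hdouble hb'
    rwa [add_assoc, hsplit, ← mul_assoc, ← pow_succ] at this

theorem le_add_lifespanBound (h : RegularOnIco F a b) (hp : 1 < p) (h₀ : 0 ≤ deriv F a)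
    (hF : ∀ x ∈ Ioo a b, |F x| ^ p ≤ deriv (deriv F) x) (hM : 0 < M) (hMF : M ≤ F a) :
    b ≤ a + lifespanBound p M := by
  by_contra! hb
  obtain ⟨k, hk⟩ := pow_unbounded_of_one_lt (F (a + lifespanBound p M) / M) one_lt_two
  rw [div_lt_iff₀ hM] at hk
  exact hk.not_ge (h.two_pow_mul_le hp h₀ hF hM hMF hb k)

end RegularOnIco

/-- ODE blow-up with lifespan estimate, vanishing initial velocity. -/
theorem ode_blowup_lifespan_vanishing_velocity (p c₀ : ℝ) (hp : 1 < p) (hc₀ : 0 < c₀) :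
    ∃ ε₀ > 0, ∃ C > 0, ∀ ε ∈ Set.Ioc (0 : ℝ) ε₀, ∀ T > (0 : ℝ),
      ∀ F : ℝ → ℝ, ContDiffOn ℝ 2 F (Set.Ico 0 T) →
        F 0 = ε * c₀ → deriv F 0 = 0 →
        (∀ t ∈ Set.Ico (0 : ℝ) T, |F t| ^ p ≤ deriv (deriv F) t) →
        T ≤ C * ε ^ (-(p - 1) / 2) := by
  refine ⟨1, one_pos, lifespanBound p c₀, lifespanBound_pos hp hc₀, ?_⟩
  intro ε hε T hT F hF hF0 hF'0 hFT
  have hF0pos : 0 < F 0 := hF0 ▸ mul_pos hε.1 hc₀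
  -- `F''(0) ≥ F(0)^p > 0` forces `F'` to be (two-sided) differentiable at `0`.
  have hF''0 : deriv (deriv F) 0 ≠ 0 :=
    ((Real.rpow_pos_of_pos (abs_pos.2 hF0pos.ne') p).trans_le (hFT 0 ⟨le_rfl, hT⟩)).ne'
  have hreg := RegularOnIco.of_contDiffOn hF (differentiableAt_of_deriv_ne_zero hF''0)
  have hlife := hreg.le_add_lifespanBound hp hF'0.ge
    (fun t ht => hFT t (Ioo_subset_Ico_self ht)) hF0pos le_rfl
  rwa [zero_add, hF0, lifespanBound_mul hε.1.le hc₀.le, mul_comm, ← neg_sub] at hlife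
end
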